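/- arXiv:1209.5021 — 2 statements merged into one kernel-verified Lean document; each statement's English description precedes it below -/
import Mathlib

section
/- Under the diagonal action of GL_2(F_3), the set of all 81 symmetric 2×2×2 tensors over F_3 decomposes into exactly 6 orbits, of sizes 1, 8, 24, 8, 24, 16. -/
open scoped BigOperators

/-- A tensor of order `k` whose indices each range over `{1,2}` (coded as `Fin 2`),
with entries in `ZMod p`, is symmetric if its entries are invariant under all
permutations of the indices. -/
def IsSymTensor (k p : ℕ) (X : (Fin k → Fin 2) → ZMod p) : Prop :=
  ∀ σ : Equiv.Perm (Fin k), ∀ v : Fin k → Fin 2, X (v ∘ σ) = X v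

/-- The symmetric simple (rank-one) tensor `u ⊗ u ⊗ ⋯ ⊗ u` (`k` factors):
its `(v 0, …, v (k-1))` entry is `∏ i, u (v i)`. -/
def simpleTensor (k p : ℕ) (u : Fin 2 → ZMod p) : (Fin k → Fin 2) → ZMod p :=
  fun v => ∏ i, u (v i)

/-- `X` is a sum of `s` nonzero symmetric simple tensors. -/
def HasSymDecompLen (k p : ℕ) (X : (Fin k → Fin 2) → ZMod p) (s : ℕ) : Prop :=
  ∃ u : Fin s → Fin 2 → ZMod p,
    (∀ i, simpleTensor k p (u i) ≠ 0) ∧ X = ∑ i, simpleTensor k p (u i)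

/-- `X` admits a symmetric decomposition: it is a finite sum of
(nonzero) symmetric simple tensors. -/
def HasSymDecomp (k p : ℕ) (X : (Fin k → Fin 2) → ZMod p) : Prop :=
  ∃ s, HasSymDecompLen k p X s

/-- The symmetric rank of `X`: the least number of symmetric simple tensors
summing to `X` (the zero tensor has symmetric rank `0`). -/
noncomputable def symRank (k p : ℕ) (X : (Fin k → Fin 2) → ZMod p) : ℕ :=
  sInf {s | HasSymDecompLen k p X s}

/-- The diagonal action of a `2 × 2` matrix `g` on an order-`k` tensor:
`(g·X)_v = ∑_w (∏ i, g (v i) (w i)) * X_w`. -/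
def glAct (k p : ℕ) (g : Matrix (Fin 2) (Fin 2) (ZMod p))
    (X : (Fin k → Fin 2) → ZMod p) : (Fin k → Fin 2) → ZMod p :=
  fun v => ∑ w : Fin k → Fin 2, (∏ i, g (v i) (w i)) * X w

/-- The orbit of a tensor `X` under the diagonal action of `GL₂(F_p)`. -/
def glOrbit (k p : ℕ) (X : (Fin k → Fin 2) → ZMod p) :
    Set ((Fin k → Fin 2) → ZMod p) :=
  {Y | ∃ g : GL (Fin 2) (ZMod p), Y = glAct k p (g : Matrix (Fin 2) (Fin 2) (ZMod p)) X}

def tbl (a : Fin 2 → Fin 2 → Fin 2 → ZMod 3) : (Fin 3 → Fin 2) → ZMod 3 :=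
  fun v => a (v 0) (v 1) (v 2)

def reps' : Fin 6 → ((Fin 3 → Fin 2) → ZMod 3) :=
  ![tbl ![![![0,0],![0,0]],![![0,0],![0,0]]],
    tbl ![![![0,0],![0,0]],![![0,0],![0,1]]],
    tbl ![![![0,1],![1,0]],![![1,0],![0,1]]],
    tbl ![![![0,0],![0,1]],![![0,1],![1,0]]],
    tbl ![![![0,1],![1,0]],![![1,0],![0,2]]],
    tbl ![![![0,0],![0,1]],![![0,1],![1,1]]]]

def orbF (X : (Fin 3 → Fin 2) → ZMod 3) : Finset ((Fin 3 → Fin 2) → ZMod 3) :=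
  (Finset.univ.filter fun m : Matrix (Fin 2) (Fin 2) (ZMod 3) => m.det ≠ 0).image
    (fun m => glAct 3 3 m X)

def symOf (a b c d : ZMod 3) : (Fin 3 → Fin 2) → ZMod 3 :=
  fun v => ![a, b, c, d] ⟨(v 0).val + (v 1).val + (v 2).val,
    by have := (v 0).isLt; have := (v 1).isLt; have := (v 2).isLt; omega⟩

lemma glOrbit_eq_orbF (X : (Fin 3 → Fin 2) → ZMod 3) :
    glOrbit 3 3 X = ↑(orbF X) := by
  ext Y
  simp only [glOrbit, Set.mem_setOf_eq, orbF, Finset.coe_image, Set.mem_image,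
    Finset.mem_coe, Finset.mem_filter, Finset.mem_univ, true_and]
  constructor
  · rintro ⟨g, rfl⟩
    refine ⟨g, ?_, rfl⟩
    exact ((Matrix.isUnit_iff_isUnit_det _).mp g.isUnit).ne_zero
  · rintro ⟨m, hm, rfl⟩
    obtain ⟨u, hu⟩ := (Matrix.isUnit_iff_isUnit_det m).mpr (isUnit_iff_ne_zero.mpr hm)
    exact ⟨u, by rw [hu]⟩

lemma sym3 (X : (Fin 3 → Fin 2) → ZMod 3) (hX : IsSymTensor 3 3 X)
    (w w' : Fin 3 → Fin 2) (σ : Equiv.Perm (Fin 3)) (h : w = w' ∘ σ) :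
    X w = X w' := by rw [h, hX]

lemma sym_eq (X : (Fin 3 → Fin 2) → ZMod 3) (hX : IsSymTensor 3 3 X) :
    X = symOf (X ![0,0,0]) (X ![1,0,0]) (X ![1,1,0]) (X ![1,1,1]) := by
  funext v
  have e : v = ![v 0, v 1, v 2] := by funext i; fin_cases i <;> rfl
  rw [e]
  have h0 : v 0 = 0 ∨ v 0 = 1 := by omega
  have h1 : v 1 = 0 ∨ v 1 = 1 := by omega
  have h2 : v 2 = 0 ∨ v 2 = 1 := by omega
  rcases h0 with h0 | h0 <;> rcases h1 with h1 | h1 <;> rcases h2 with h2 | h2 <;>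
    rw [h0, h1, h2]
  · exact sym3 X hX _ ![0,0,0] 1 (by funext i; fin_cases i <;> rfl)
  · exact sym3 X hX _ ![1,0,0] (Equiv.swap 0 2) (by funext i; fin_cases i <;> rfl)
  · exact sym3 X hX _ ![1,0,0] (Equiv.swap 0 1) (by funext i; fin_cases i <;> rfl)
  · exact sym3 X hX _ ![1,1,0] (Equiv.swap 0 2) (by funext i; fin_cases i <;> rfl)
  · exact sym3 X hX _ ![1,0,0] 1 (by funext i; fin_cases i <;> rfl)
  · exact sym3 X hX _ ![1,1,0] (Equiv.swap 1 2) (by funext i; fin_cases i <;> rfl)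
  · exact sym3 X hX _ ![1,1,0] 1 (by funext i; fin_cases i <;> rfl)
  · exact sym3 X hX _ ![1,1,1] 1 (by funext i; fin_cases i <;> rfl)

set_option maxHeartbeats 4000000 in
set_option maxRecDepth 100000 in
lemma reps'_sym : ∀ i, IsSymTensor 3 3 (reps' i) := by unfold IsSymTensor; decide

set_option maxHeartbeats 4000000 in
set_option maxRecDepth 100000 in
lemma reps'_distinct : ∀ i j : Fin 6, i ≠ j → reps' j ∉ orbF (reps' i) := by decide

set_option maxHeartbeats 4000000 in
set_option maxRecDepth 100000 in
lemma reps'_card : ∀ i, (orbF (reps' i)).card = ![1,8,24,8,24,16] i := by decide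

set_option maxHeartbeats 4000000 in
set_option maxRecDepth 100000 in
lemma reps'_surj : ∀ a b c d : ZMod 3, ∃ i, symOf a b c d ∈ orbF (reps' i) := by decide

/-- Under the diagonal action of GL₂(F₃), the 81 symmetric 2×2×2 tensors over
F₃ decompose into exactly 6 orbits, of sizes 1, 8, 24, 8, 24, 16. -/
theorem stmt5 :
    ∃ reps : Fin 6 → ((Fin 3 → Fin 2) → ZMod 3),
      (∀ i, IsSymTensor 3 3 (reps i)) ∧
      (∀ i j, i ≠ j → reps j ∉ glOrbit 3 3 (reps i)) ∧
      (∀ X : (Fin 3 → Fin 2) → ZMod 3, IsSymTensor 3 3 X →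
        ∃ i, X ∈ glOrbit 3 3 (reps i)) ∧
      (fun i => Nat.card (glOrbit 3 3 (reps i))) = ![1, 8, 24, 8, 24, 16] := by
    refine ⟨reps', reps'_sym, ?_, ?_, ?_⟩
    · intro i j hij
      rw [glOrbit_eq_orbF]
      exact fun h => reps'_distinct i j hij (Finset.mem_coe.mp h)
    · intro X hX
      obtain ⟨i, hi⟩ := reps'_surj (X ![0,0,0]) (X ![1,0,0]) (X ![1,1,0]) (X ![1,1,1])
      exact ⟨i, by rw [sym_eq X hX, glOrbit_eq_orbF]; exact Finset.mem_coe.mpr hi⟩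
    · funext i
      rw [glOrbit_eq_orbF, Nat.card_coe_set_eq, Set.ncard_coe_finset]
      exact reps'_card i
end

section
/- Over F_3, the symmetric 2×2×2×2 tensor X defined by x_{ijkl} = 1 whenever (i,j,k,l) is a permutation of (1,1,2,2) and x_{ijkl} = 0 otherwise has symmetric rank exactly 8, and its orbit under the diagonal action of GL_2(F_3) consists of X alone (orbit size 1). -/
open scoped BigOperators

/-! ### Auxiliary material -/

set_option maxHeartbeats 4000000
set_option maxRecDepth 10000

/-- The tensor of the statement, as a top-level definition. -/
def myX : (Fin 4 → Fin 2) → ZMod 3 :=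
  fun v => if (Finset.univ.filter fun i => v i = 1).card = 2 then 1 else 0

def u8 : Fin 8 → Fin 2 → ZMod 3 :=
  ![![1,0],![1,0],![0,1],![0,1],![1,1],![1,1],![1,2],![1,2]]

lemma decomp8 : HasSymDecompLen 4 3 myX 8 :=
  ⟨u8, by decide, by decide⟩

/-- Invariance of `myX` under all invertible matrices. -/
lemma inv_lemma : ∀ g : Matrix (Fin 2) (Fin 2) (ZMod 3), g.det ≠ 0 →
    glAct 4 3 g myX = myX := by decide

def v0 : Fin 4 → Fin 2 := ![0,0,0,0]
def v1 : Fin 4 → Fin 2 := ![1,0,0,0]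
def v2 : Fin 4 → Fin 2 := ![1,1,0,0]
def v4 : Fin 4 → Fin 2 := ![1,1,1,1]

/-- A coefficient function supported on two index vectors. -/
def cf (x y : Fin 4 → Fin 2) (a b : ZMod 3) : (Fin 4 → Fin 2) → ZMod 3 :=
  fun v => (if v = x then a else 0) + (if v = y then b else 0)

def c0 := cf v0 v2 1 2
def c1 := cf v4 v2 1 2
def c2' := cf v1 v2 2 2
def c3' := cf v1 v2 1 2

abbrev P0 : (Fin 2 → ZMod 3) → Prop := fun w => w 1 = 0
abbrev P1 : (Fin 2 → ZMod 3) → Prop := fun w => w 0 = 0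
abbrev P2 : (Fin 2 → ZMod 3) → Prop := fun w => w 0 = w 1
abbrev P3 : (Fin 2 → ZMod 3) → Prop := fun w => w 1 = 2 * w 0

lemma pt0 : ∀ w, simpleTensor 4 3 w ≠ 0 →
    (∑ v, c0 v * simpleTensor 4 3 w v) = if P0 w then 1 else 0 := by decide
lemma pt1 : ∀ w, simpleTensor 4 3 w ≠ 0 →
    (∑ v, c1 v * simpleTensor 4 3 w v) = if P1 w then 1 else 0 := by decide
lemma pt2 : ∀ w, simpleTensor 4 3 w ≠ 0 →
    (∑ v, c2' v * simpleTensor 4 3 w v) = if P2 w then 1 else 0 := by decide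
lemma pt3 : ∀ w, simpleTensor 4 3 w ≠ 0 →
    (∑ v, c3' v * simpleTensor 4 3 w v) = if P3 w then 1 else 0 := by decide

lemma L0 : (∑ v, c0 v * myX v) = 2 := by decide
lemma L1 : (∑ v, c1 v * myX v) = 2 := by decide
lemma L2 : (∑ v, c2' v * myX v) = 2 := by decide
lemma L3 : (∑ v, c3' v * myX v) = 2 := by decide

lemma part_lemma : ∀ w, simpleTensor 4 3 w ≠ 0 →
    ((if P0 w then 1 else 0) + (if P1 w then 1 else 0) + (if P2 w then 1 else 0)
      + (if P3 w then 1 else 0) : ℕ) = 1 := by decide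

lemma count_ge (s : ℕ) (u : Fin s → Fin 2 → ZMod 3)
    (hnz : ∀ i, simpleTensor 4 3 (u i) ≠ 0)
    (hX : myX = ∑ i, simpleTensor 4 3 (u i))
    (c : (Fin 4 → Fin 2) → ZMod 3) (P : (Fin 2 → ZMod 3) → Prop) [DecidablePred P]
    (hpt : ∀ w, simpleTensor 4 3 w ≠ 0 →
      (∑ v, c v * simpleTensor 4 3 w v) = if P w then 1 else 0)
    (hL : (∑ v, c v * myX v) = 2) :
    2 ≤ (Finset.univ.filter (fun i => P (u i))).card := by
  set t := (Finset.univ.filter (fun i => P (u i))).card with ht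
  have h1 : ((t : ℕ) : ZMod 3) = 2 := by
    have e1 : ((t : ℕ) : ZMod 3) = ∑ i, (if P (u i) then (1 : ZMod 3) else 0) := by
      rw [ht, Finset.card_filter, Nat.cast_sum]
      exact Finset.sum_congr rfl fun i _ => by split <;> simp
    rw [e1]
    have e2 : ∑ i, (if P (u i) then (1 : ZMod 3) else 0)
        = ∑ i, ∑ v, c v * simpleTensor 4 3 (u i) v :=
      Finset.sum_congr rfl fun i _ => (hpt (u i) (hnz i)).symm
    rw [e2, Finset.sum_comm]
    calc ∑ v, ∑ i, c v * simpleTensor 4 3 (u i) v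
        = ∑ v, c v * ∑ i, simpleTensor 4 3 (u i) v := by
          simp [Finset.mul_sum]
      _ = ∑ v, c v * myX v := by
          refine Finset.sum_congr rfl fun v _ => ?_
          rw [hX]; simp
      _ = 2 := hL
  rcases (ZMod.natCast_eq_iff 3 t 2).mp h1 with ⟨k, hk⟩
  have h2 : ((2 : ZMod 3)).val = 2 := rfl
  omega

lemma lower (s : ℕ) (h : HasSymDecompLen 4 3 myX s) : 8 ≤ s := by
  obtain ⟨u, hnz, hX⟩ := h
  have h0 := count_ge s u hnz hX c0 P0 pt0 L0
  have h1 := count_ge s u hnz hX c1 P1 pt1 L1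
  have h2 := count_ge s u hnz hX c2' P2 pt2 L2
  have h3 := count_ge s u hnz hX c3' P3 pt3 L3
  have hs : s = (Finset.univ.filter (fun i => P0 (u i))).card
      + (Finset.univ.filter (fun i => P1 (u i))).card
      + (Finset.univ.filter (fun i => P2 (u i))).card
      + (Finset.univ.filter (fun i => P3 (u i))).card := by
    calc s = ∑ _i : Fin s, 1 := by
            rw [Finset.sum_const, smul_eq_mul, mul_one, Finset.card_univ, Fintype.card_fin]
      _ = ∑ i : Fin s, ((if P0 (u i) then 1 else 0) + (if P1 (u i) then 1 else 0)
            + (if P2 (u i) then 1 else 0) + (if P3 (u i) then 1 else 0) : ℕ) :=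
          Finset.sum_congr rfl fun i _ => (part_lemma (u i) (hnz i)).symm
      _ = (∑ i : Fin s, if P0 (u i) then 1 else 0) + (∑ i : Fin s, if P1 (u i) then 1 else 0)
            + (∑ i : Fin s, if P2 (u i) then 1 else 0)
            + (∑ i : Fin s, if P3 (u i) then 1 else 0) := by
          rw [Finset.sum_add_distrib, Finset.sum_add_distrib, Finset.sum_add_distrib]
      _ = _ := by
          rw [← Finset.card_filter, ← Finset.card_filter, ← Finset.card_filter,
            ← Finset.card_filter]
  omega

/-- Over F₃, the symmetric 2×2×2×2 tensor with `x_{ijkl} = 1` whenever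
`(i,j,k,l)` is a permutation of `(1,1,2,2)` and `x_{ijkl} = 0` otherwise has
symmetric rank exactly 8, and its GL₂(F₃)-orbit is `{X}` (orbit size 1). -/
theorem stmt16 :
    let X : (Fin 4 → Fin 2) → ZMod 3 :=
      fun v => if (Finset.univ.filter fun i => v i = 1).card = 2 then 1 else 0
    HasSymDecomp 4 3 X ∧ symRank 4 3 X = 8 ∧
      glOrbit 4 3 X = {X} ∧ Nat.card (glOrbit 4 3 X) = 1 := by
  intro X
  have hXeq : X = myX := rfl
  have hdl : HasSymDecompLen 4 3 X 8 := hXeq ▸ decomp8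
  have horb : glOrbit 4 3 X = {X} := by
    ext Y
    constructor
    · rintro ⟨g, rfl⟩
      have hg : ((g : Matrix (Fin 2) (Fin 2) (ZMod 3))).det ≠ 0 :=
        ((Matrix.isUnit_iff_isUnit_det _).mp g.isUnit).ne_zero
      show glAct 4 3 _ X = X
      rw [hXeq]
      exact inv_lemma _ hg
    · rintro rfl
      refine ⟨1, ?_⟩
      rw [Units.val_one, hXeq]
      exact (inv_lemma 1 (by norm_num)).symm
  refine ⟨⟨8, hdl⟩, ?_, horb, ?_⟩
  · refine le_antisymm (Nat.sInf_le hdl) (le_csInf ⟨8, hdl⟩ fun m hm => ?_)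
    exact lower m (hXeq ▸ hm)
  · rw [horb]
    exact Nat.card_unique
end
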